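/- arXiv:2012.15844 — 2 statements merged into one kernel-verified Lean document; each statement's English description precedes it below -/
import Mathlib

section
/- Let rk be a Sylvester matrix rank function on the cartesian product ring R = R₁ × R₂. Then rk((1,0)) + rk((0,1)) = 1, and for any matrix A over R, writing A = A₁ + A₂ where A₁ has entries with second coordinate 0 (obtained by projecting entries to R₁) and A₂ has entries with first coordinate 0, we have rk(A) = rk(A₁) + rk(A₂). -/
/-- A Sylvester matrix rank function on a ring `R`: it assigns a non-negative real number
to each matrix over `R` satisfying (SMat1)-(SMat4). -/
structure SylvesterMatrixRank (R : Type) [Ring R] where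
  rk : ∀ {n m : ℕ}, Matrix (Fin n) (Fin m) R → ℝ
  rk_nonneg : ∀ {n m : ℕ} (A : Matrix (Fin n) (Fin m) R), 0 ≤ rk A
  rk_zero : ∀ {n m : ℕ}, rk (0 : Matrix (Fin n) (Fin m) R) = 0
  rk_one : rk (1 : Matrix (Fin 1) (Fin 1) R) = 1
  rk_mul_left : ∀ {n m k : ℕ} (A : Matrix (Fin n) (Fin m) R) (B : Matrix (Fin m) (Fin k) R),
    rk (A * B) ≤ rk A
  rk_mul_right : ∀ {n m k : ℕ} (A : Matrix (Fin n) (Fin m) R) (B : Matrix (Fin m) (Fin k) R),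
    rk (A * B) ≤ rk B
  rk_diag : ∀ {n m n' m' : ℕ} (A : Matrix (Fin n) (Fin m) R) (B : Matrix (Fin n') (Fin m') R),
    rk ((Matrix.fromBlocks A 0 0 B).submatrix finSumFinEquiv.symm finSumFinEquiv.symm)
      = rk A + rk B
  rk_triangle : ∀ {n m n' m' : ℕ} (A : Matrix (Fin n) (Fin m) R) (B : Matrix (Fin n') (Fin m') R)
      (C : Matrix (Fin n) (Fin m') R),
    rk A + rk B ≤
      rk ((Matrix.fromBlocks A C 0 B).submatrix finSumFinEquiv.symm finSumFinEquiv.symm)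

/-!
The element `e = (1, 0)` is a central idempotent of `R₁ × R₂` with `1 - e = (0, 1)`, and
`e • A`, `(1 - e) • A` are the two projections of `A`. For central idempotent `e`, multiplying
`A` on the left by the column `(e, 1 - e)` and on the right by the row `(e, 1 - e)` (as scalar
matrices) gives `diag (e • A, (1 - e) • A)`, while multiplying this block matrix by the column
`(1, 1)` and the row `(1, 1)` gives back `e • A + (1 - e) • A = A`. By (SMat2) both matrices have
the same rank, which is `rk (e • A) + rk ((1 - e) • A)` by (SMat3). Taking `A = 1` gives the
normalisation `rk e + rk (1 - e) = 1`.
-/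

open Matrix

theorem Matrix.scalar_mul_mul_scalar_of_mem_center {R n m : Type} [Ring R] [Fintype n]
    [DecidableEq n] [Fintype m] [DecidableEq m] {a b : R} (hb : b ∈ Subring.center R)
    (A : Matrix n m R) :
    scalar n a * A * scalar m b = (a * b) • A := by
  rw [Matrix.mul_assoc, ← scalar_comm b fun r => (Subring.mem_center_iff.1 hb r).symm,
    ← Matrix.mul_assoc, ← map_mul, scalar_apply, ← smul_eq_diagonal_mul]

namespace SylvesterMatrixRank

variable {R : Type} [Ring R] (rk : SylvesterMatrixRank R)

theorem rk_mul_mul_le {n m n' m' : ℕ} (P : Matrix (Fin n) (Fin n') R)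
    (A : Matrix (Fin n') (Fin m') R) (Q : Matrix (Fin m') (Fin m) R) :
    rk.rk (P * A * Q) ≤ rk.rk A :=
  (rk.rk_mul_left _ _).trans (rk.rk_mul_right _ _)

theorem rk_eq_rk_submatrix_of_mul_mul_eq {n m n' m' : ℕ} {ι κ : Type} [Fintype ι] [Fintype κ]
    (e : Fin n' ≃ ι) (f : Fin m' ≃ κ) {A : Matrix (Fin n) (Fin m) R} {B : Matrix ι κ R}
    (P : Matrix ι (Fin n) R) (Q : Matrix (Fin m) κ R)
    (P' : Matrix (Fin n) ι R) (Q' : Matrix κ (Fin m) R)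
    (hB : P * A * Q = B) (hA : P' * B * Q' = A) :
    rk.rk A = rk.rk (B.submatrix e f) := by
  apply le_antisymm
  · calc rk.rk A = rk.rk (P'.submatrix id e * B.submatrix e f * Q'.submatrix f id) := by
          rw [submatrix_mul_equiv, submatrix_mul_equiv, hA, submatrix_id_id]
      _ ≤ rk.rk (B.submatrix e f) := rk.rk_mul_mul_le _ _ _
  · calc rk.rk (B.submatrix e f) = rk.rk (P.submatrix e id * A * Q.submatrix id f) := by
          rw [← hB, submatrix_mul _ _ e id f Function.bijective_id,
            submatrix_mul _ _ e id id Function.bijective_id, submatrix_id_id]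
      _ ≤ rk.rk A := rk.rk_mul_mul_le _ _ _

theorem rk_eq_rk_smul_add_rk_one_sub_smul {e : R} (hc : e ∈ Subring.center R)
    (hi : IsIdempotentElem e) {n m : ℕ} (A : Matrix (Fin n) (Fin m) R) :
    rk.rk A = rk.rk (e • A) + rk.rk ((1 - e) • A) := by
  have hc' : 1 - e ∈ Subring.center R := sub_mem (one_mem _) hc
  rw [← rk.rk_diag]
  refine rk.rk_eq_rk_submatrix_of_mul_mul_eq _ _
    (fromRows (scalar (Fin n) e) (scalar (Fin n) (1 - e)))
    (fromCols (scalar (Fin m) e) (scalar (Fin m) (1 - e))) (fromCols 1 1) (fromRows 1 1) ?_ ?_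
  · rw [fromRows_mul, fromRows_mul_fromCols, scalar_mul_mul_scalar_of_mem_center hc,
      scalar_mul_mul_scalar_of_mem_center hc', scalar_mul_mul_scalar_of_mem_center hc,
      scalar_mul_mul_scalar_of_mem_center hc', hi.eq, hi.mul_one_sub_self, hi.one_sub_mul_self,
      hi.one_sub.eq, zero_smul]
  · rw [fromCols_mul_fromBlocks, fromCols_mul_fromRows]
    simp only [Matrix.one_mul, Matrix.mul_zero, add_zero, zero_add, Matrix.mul_one, ← add_smul,
      add_sub_cancel, one_smul]

theorem rk_add_rk_one_sub_eq_one {e : R} (hc : e ∈ Subring.center R) (hi : IsIdempotentElem e) :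
    rk.rk !![e] + rk.rk !![1 - e] = 1 := by
  have smul_one (c : R) : c • (1 : Matrix (Fin 1) (Fin 1) R) = !![c] := by
    ext i j; fin_cases i; fin_cases j; simp
  rw [← smul_one, ← smul_one, ← rk.rk_eq_rk_smul_add_rk_one_sub_smul hc hi, rk.rk_one]

end SylvesterMatrixRank

theorem Prod.one_zero_mem_center {R₁ R₂ : Type} [Ring R₁] [Ring R₂] :
    ((1, 0) : R₁ × R₂) ∈ Subring.center (R₁ × R₂) :=
  Subring.mem_center_iff.2 fun _ => by ext <;> simp

theorem Prod.isIdempotentElem_one_zero {R₁ R₂ : Type} [MulZeroOneClass R₁] [MulZeroOneClass R₂] :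
    IsIdempotentElem ((1, 0) : R₁ × R₂) := by
  ext <;> simp

/-- For a Sylvester matrix rank function on `R₁ × R₂`, `rk (1,0) + rk (0,1) = 1`, and for
any matrix `A`, `rk A = rk A₁ + rk A₂` where `A₁` (resp. `A₂`) is obtained by projecting
the entries of `A` to the first (resp. second) coordinate. -/
theorem rk_prod_ring {R₁ R₂ : Type} [Ring R₁] [Ring R₂]
    (rk : SylvesterMatrixRank (R₁ × R₂)) :
    rk.rk !![((1, 0) : R₁ × R₂)] + rk.rk !![((0, 1) : R₁ × R₂)] = 1 ∧
    ∀ {n m : ℕ} (A : Matrix (Fin n) (Fin m) (R₁ × R₂)),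
      rk.rk A = rk.rk (A.map fun x => ((x.1, 0) : R₁ × R₂))
        + rk.rk (A.map fun x => ((0, x.2) : R₁ × R₂)) := by
  have hc : ((1, 0) : R₁ × R₂) ∈ Subring.center (R₁ × R₂) := Prod.one_zero_mem_center
  have hi : IsIdempotentElem ((1, 0) : R₁ × R₂) := Prod.isIdempotentElem_one_zero
  have one_sub : (1 - (1, 0) : R₁ × R₂) = (0, 1) := by ext <;> simp
  refine ⟨one_sub ▸ rk.rk_add_rk_one_sub_eq_one hc hi, fun A => ?_⟩
  rw [rk.rk_eq_rk_smul_add_rk_one_sub_smul hc hi A, one_sub]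
  congr 2 <;> ext <;> simp
end

section
/- Let K be a field, n a positive integer, R = K[t]/(t^n), and let rk be any Sylvester matrix rank function on R. Define b_k = rk(t^k+(t^n)) − rk(t^{k+1}+(t^n)) for 0 ≤ k ≤ n−1, and set c_k = k(b_{k−1} − b_k) for 1 ≤ k ≤ n−1 and c_n = n·b_{n−1}. Then all c_k ≥ 0, Σ_{k=1}^n c_k = 1, and rk(t^i+(t^n)) = Σ_{k=i}^n c_k·(k−i)/k for every 0 ≤ i ≤ n−1. -/
namespace SylvesterMatrixRank

variable {R : Type} [Ring R] (rk : SylvesterMatrixRank R)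

theorem rk_mul_of_mul_eq_one_left {m k : ℕ} {P Q : Matrix (Fin m) (Fin m) R} (h : Q * P = 1)
    (M : Matrix (Fin m) (Fin k) R) : rk.rk (P * M) = rk.rk M := by
  refine le_antisymm (rk.rk_mul_right _ _) ?_
  calc rk.rk M = rk.rk (Q * (P * M)) := by rw [← Matrix.mul_assoc, h, Matrix.one_mul]
    _ ≤ rk.rk (P * M) := rk.rk_mul_right _ _

theorem rk_mul_of_mul_eq_one_right {m k : ℕ} {P Q : Matrix (Fin m) (Fin m) R} (h : P * Q = 1)
    (M : Matrix (Fin k) (Fin m) R) : rk.rk (M * P) = rk.rk M := by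
  refine le_antisymm (rk.rk_mul_left _ _) ?_
  calc rk.rk M = rk.rk (M * P * Q) := by rw [Matrix.mul_assoc, h, Matrix.mul_one]
    _ ≤ rk.rk (M * P) := rk.rk_mul_left _ _

theorem rk_neg {m k : ℕ} (M : Matrix (Fin m) (Fin k) R) : rk.rk (-M) = rk.rk M := by
  rw [show -M = (-1 : Matrix (Fin m) (Fin m) R) * M by simp]
  exact rk.rk_mul_of_mul_eq_one_left (Q := -1) (by simp) M

theorem rk_diag_fin_two (a b : R) : rk.rk !![a, 0; 0, b] = rk.rk !![a] + rk.rk !![b] := by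
  have h : (Matrix.fromBlocks !![a] 0 0 !![b]).submatrix finSumFinEquiv.symm finSumFinEquiv.symm
      = !![a, 0; 0, b] := by
    ext i j
    fin_cases i <;> fin_cases j <;> simp [Matrix.fromBlocks, finSumFinEquiv, Fin.addCases]
  rw [← h, rk.rk_diag]

theorem rk_add_rk_le_rk_upperTriangular_fin_two (a b c : R) :
    rk.rk !![a] + rk.rk !![b] ≤ rk.rk !![a, c; 0, b] := by
  have h : (Matrix.fromBlocks !![a] !![c] 0 !![b]).submatrix finSumFinEquiv.symm
      finSumFinEquiv.symm = !![a, c; 0, b] := by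
    ext i j
    fin_cases i <;> fin_cases j <;> simp [Matrix.fromBlocks, finSumFinEquiv, Fin.addCases]
  simpa only [h] using rk.rk_triangle !![a] !![b] !![c]

theorem rk_mul_add_rk_mul_le (a b c : R) :
    rk.rk !![a * b] + rk.rk !![b * c] ≤ rk.rk !![b] + rk.rk !![a * b * c] := by
  have hneg : !![-(b * c)] = -!![b * c] := by simp
  calc rk.rk !![a * b] + rk.rk !![b * c] = rk.rk !![-(b * c)] + rk.rk !![a * b] := by
        rw [hneg, rk_neg, add_comm]
    _ ≤ rk.rk !![-(b * c), b; 0, a * b] := rk.rk_add_rk_le_rk_upperTriangular_fin_two _ _ _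
    _ = rk.rk (!![0, 1; 1, 0] * !![0, a * b; -(b * c), b]) := by simp
    _ = rk.rk !![0, a * b; -(b * c), b] :=
        rk.rk_mul_of_mul_eq_one_left (Q := !![0, 1; 1, 0]) (by simp [Matrix.one_fin_two]) _
    _ = rk.rk (!![a * b * c, a * b; 0, b] * !![1, 0; -c, 1]) := by simp [mul_assoc]
    _ = rk.rk !![a * b * c, a * b; 0, b] :=
        rk.rk_mul_of_mul_eq_one_right (Q := !![1, 0; c, 1]) (by simp [Matrix.one_fin_two]) _
    _ = rk.rk (!![1, a; 0, 1] * !![a * b * c, 0; 0, b]) := by simp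
    _ = rk.rk !![a * b * c, 0; 0, b] :=
        rk.rk_mul_of_mul_eq_one_left (Q := !![1, -a; 0, 1]) (by simp [Matrix.one_fin_two]) _
    _ = rk.rk !![b] + rk.rk !![a * b * c] := by rw [rk_diag_fin_two, add_comm]

theorem antitone_rk_pow_sub (a : R) :
    Antitone fun i : ℕ => rk.rk !![a ^ i] - rk.rk !![a ^ (i + 1)] := by
  refine antitone_nat_of_succ_le fun i => ?_
  have h := rk.rk_mul_add_rk_mul_le a (a ^ i) a
  simp only [← pow_succ, ← pow_succ'] at h
  linarith

end SylvesterMatrixRank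

/-- `((k : ℝ) - i) / k` is the normalized rank of multiplication by `t ^ i` on `K[t]/(t ^ k)`. -/
noncomputable def blockRankSum (n : ℕ) (c : ℕ → ℝ) (i : ℕ) : ℝ :=
  ∑ k ∈ Finset.Icc 1 n, if i ≤ k then c k * (((k : ℝ) - i) / k) else 0

theorem blockRankSum_zero (n : ℕ) (c : ℕ → ℝ) :
    blockRankSum n c 0 = ∑ k ∈ Finset.Icc 1 n, c k :=
  Finset.sum_congr rfl fun k hk => by
    have hk0 : (k : ℝ) ≠ 0 := by have := (Finset.mem_Icc.1 hk).1; positivity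
    simp [hk0]

theorem blockRankSum_self (n : ℕ) (c : ℕ → ℝ) : blockRankSum n c n = 0 :=
  Finset.sum_eq_zero fun k hk => by
    rw [Finset.mem_Icc] at hk
    split_ifs with h
    · rw [show k = n by omega]; simp
    · rfl

theorem blockRankSum_sub_succ (n : ℕ) (c : ℕ → ℝ) (i : ℕ) :
    blockRankSum n c i - blockRankSum n c (i + 1) = ∑ k ∈ Finset.Icc (i + 1) n, c k / k := by
  have hIcc : Finset.Icc (i + 1) n = (Finset.Icc 1 n).filter (i + 1 ≤ ·) := by
    ext k; simp only [Finset.mem_Icc, Finset.mem_filter]; omega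
  rw [blockRankSum, blockRankSum, ← Finset.sum_sub_distrib, hIcc, Finset.sum_filter]
  refine Finset.sum_congr rfl fun k _ => ?_
  by_cases hik : i + 1 ≤ k
  · rw [if_pos hik, if_pos (by omega), if_pos hik]; push_cast; ring
  · by_cases hk : i = k
    · subst hk; simp
    · simp [hik, show ¬i ≤ k by omega]

section Telescoping

variable {n : ℕ} {b c : ℕ → ℝ}

theorem sum_Icc_div_eq (hc : ∀ k : ℕ, 1 ≤ k → k ≤ n - 1 → c k = k * (b (k - 1) - b k))
    (hcn : c n = n * b (n - 1)) {i : ℕ} (hi : i < n) :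
    ∑ k ∈ Finset.Icc (i + 1) n, c k / k = b i := by
  induction hd : n - (i + 1) generalizing i with
  | zero =>
    obtain rfl : n = i + 1 := by omega
    have hn0 : ((i + 1 : ℕ) : ℝ) ≠ 0 := by positivity
    rw [Finset.Icc_self, Finset.sum_singleton, hcn, mul_div_cancel_left₀ _ hn0]
    rfl
  | succ d ih =>
    have hk0 : ((i + 1 : ℕ) : ℝ) ≠ 0 := by positivity
    rw [← Finset.insert_Icc_add_one_left_eq_Icc (by omega), Finset.sum_insert (by simp),
      ih (by omega) (by omega), hc (i + 1) (by omega) (by omega), mul_div_cancel_left₀ _ hk0,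
      Nat.add_sub_cancel, sub_add_cancel]

theorem eq_blockRankSum_of_antitone (r : ℕ → ℝ) (hr0 : r 0 = 1) (hrn : r n = 0)
    (hr_nonneg : ∀ i, 0 ≤ r i) (hb : ∀ k, b k = r k - r (k + 1)) (hb_anti : Antitone b)
    (hc : ∀ k : ℕ, 1 ≤ k → k ≤ n - 1 → c k = k * (b (k - 1) - b k))
    (hcn : c n = n * b (n - 1)) :
    (∀ k : ℕ, 1 ≤ k → k ≤ n → 0 ≤ c k) ∧
    (∑ k ∈ Finset.Icc 1 n, c k = 1) ∧
    (∀ i : ℕ, i ≤ n - 1 → r i = blockRankSum n c i) := by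
  have hn : 1 ≤ n := Nat.one_le_iff_ne_zero.2 fun h => by simp [h, hr0] at hrn
  have hr_eq : ∀ i ≤ n, blockRankSum n c i = r i := fun i hi =>
    Nat.decreasingInduction (motive := fun i _ => blockRankSum n c i = r i)
      (fun k hk ih => by
        have := blockRankSum_sub_succ n c k
        rw [sum_Icc_div_eq hc hcn hk, ih, hb] at this
        linarith)
      (by rw [blockRankSum_self, hrn]) hi
  refine ⟨fun k hk1 hkn => ?_, ?_, fun i hi => (hr_eq i (by omega)).symm⟩
  · rcases hkn.lt_or_eq with hkn | rfl
    · rw [hc k hk1 (by omega)]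
      exact mul_nonneg k.cast_nonneg (sub_nonneg.2 (hb_anti (Nat.sub_le k 1)))
    · have hlast : b (k - 1) = r (k - 1) := by rw [hb, Nat.sub_add_cancel hk1, hrn, sub_zero]
      rw [hcn, hlast]
      exact mul_nonneg k.cast_nonneg (hr_nonneg _)
  · rw [← blockRankSum_zero, hr_eq 0 (Nat.zero_le n), hr0]

end Telescoping

open Polynomial in
theorem rank_convex_combination_general (K : Type) [Field K] (n : ℕ)
    (rk : SylvesterMatrixRank (AdjoinRoot (X ^ n : K[X])))
    (b c : ℕ → ℝ)
    (hb : ∀ k : ℕ, b k = rk.rk !![(AdjoinRoot.root (X ^ n : K[X])) ^ k]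
      - rk.rk !![(AdjoinRoot.root (X ^ n : K[X])) ^ (k + 1)])
    (hc : ∀ k : ℕ, 1 ≤ k → k ≤ n - 1 → c k = k * (b (k - 1) - b k))
    (hcn : c n = n * b (n - 1)) :
    (∀ k : ℕ, 1 ≤ k → k ≤ n → 0 ≤ c k) ∧
    (∑ k ∈ Finset.Icc 1 n, c k = 1) ∧
    (∀ i : ℕ, i ≤ n - 1 →
      rk.rk !![(AdjoinRoot.root (X ^ n : K[X])) ^ i] =
        ∑ k ∈ Finset.Icc 1 n, if i ≤ k then c k * (((k : ℝ) - i) / k) else 0) := by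
  have htn : AdjoinRoot.root (X ^ n : K[X]) ^ n = 0 := by
    rw [← AdjoinRoot.mk_X, ← map_pow, AdjoinRoot.mk_self]
  set t := AdjoinRoot.root (X ^ n : K[X])
  have hone : !![t ^ 0] = 1 := by ext i j; fin_cases i; fin_cases j; simp
  have hzero : !![t ^ n] = 0 := by ext i j; fin_cases i; fin_cases j; simp [htn]
  have hb_anti : Antitone b := funext hb ▸ rk.antitone_rk_pow_sub t
  exact eq_blockRankSum_of_antitone (fun i => rk.rk !![t ^ i]) (by simp only [hone, rk.rk_one])
    (by simp only [hzero, rk.rk_zero]) (fun i => rk.rk_nonneg _) hb hb_anti hc hcn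

open Polynomial in
/-- Let `K` be a field, `n ≥ 1`, `R = K[t]/(t^n)` and `rk` any Sylvester matrix rank
function on `R`. With `b k = rk (t^k) - rk (t^(k+1))`, `c k = k * (b (k-1) - b k)` for
`1 ≤ k ≤ n-1` and `c n = n * b (n-1)`, all the `c k` (for `1 ≤ k ≤ n`) are non-negative,
they add up to `1`, and `rk (t^i) = Σ_{k=i}^{n} c k * (k - i)/k` for all `0 ≤ i ≤ n-1`. -/
theorem rank_convex_combination (K : Type) [Field K] (n : ℕ) (hn : 1 ≤ n)
    (rk : SylvesterMatrixRank (AdjoinRoot (X ^ n : K[X])))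
    (b c : ℕ → ℝ)
    (hb : ∀ k : ℕ, b k = rk.rk !![(AdjoinRoot.root (X ^ n : K[X])) ^ k]
      - rk.rk !![(AdjoinRoot.root (X ^ n : K[X])) ^ (k + 1)])
    (hc : ∀ k : ℕ, 1 ≤ k → k ≤ n - 1 → c k = k * (b (k - 1) - b k))
    (hcn : c n = n * b (n - 1)) :
    (∀ k : ℕ, 1 ≤ k → k ≤ n → 0 ≤ c k) ∧
    (∑ k ∈ Finset.Icc 1 n, c k = 1) ∧
    (∀ i : ℕ, i ≤ n - 1 →
      rk.rk !![(AdjoinRoot.root (X ^ n : K[X])) ^ i] =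
        ∑ k ∈ Finset.Icc 1 n, if i ≤ k then c k * (((k : ℝ) - i) / k) else 0) :=
  rank_convex_combination_general K n rk b c hb hc hcn
end
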